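/- arXiv:2307.12513 — 5 statements merged into one kernel-verified Lean document; each statement's English description precedes it below -/
import Mathlib

section
/- Let n ≥ m ≥ 1, let p > n be a prime, and let V be an m-certificate. Then every nonzero row vector u ∈ ℤ^n having at most m nonzero entries satisfies uV ≠ 0; that is, every nonzero integer vector u with at most m nonzero coordinates is V-detectable as a row. -/
/-- Key Vandermonde step: if `w` has at most `m` nonzero entries and `w V = 0`
over `ℤ`, then every entry of `w` is divisible by `p`. -/
lemma stmt_2_key (n m p : ℕ) (hmn : m ≤ n) (hp : p.Prime) (hnp : n < p)
    (V : Matrix (Fin n) (Fin m) ℤ)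
    (hV_mod : ∀ i j, V i j ≡ ((i : ℤ) + 1) ^ (j : ℕ) [ZMOD (p : ℤ)])
    (w : Fin n → ℤ)
    (hsupp : (Finset.univ.filter fun i => w i ≠ 0).card ≤ m)
    (hw : Matrix.vecMul w V = 0) : ∀ i, (p : ℤ) ∣ w i := by
  haveI : Fact p.Prime := ⟨hp⟩
  obtain ⟨S, hsubS, -, hScard⟩ := Finset.exists_subsuperset_card_eq
    (Finset.subset_univ (Finset.univ.filter fun i => w i ≠ 0)) hsupp
    (by simpa using hmn)
  have e : {x // x ∈ S} ≃ Fin m := S.equivFin.trans (finCongr hScard)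
  -- the Vandermonde points
  set v : Fin m → ZMod p := fun k => (((e.symm k : Fin n) : ℕ) : ZMod p) + 1 with hv
  have hvinj : Function.Injective v := by
    intro k₁ k₂ hk
    have h1 : ((((e.symm k₁ : Fin n) : ℕ) : ZMod p)) = (((e.symm k₂ : Fin n) : ℕ) : ZMod p) := by
      have := hk
      simpa [hv] using this
    have hlt1 : ((e.symm k₁ : Fin n) : ℕ) < p := lt_trans (Fin.is_lt _) hnp
    have hlt2 : ((e.symm k₂ : Fin n) : ℕ) < p := lt_trans (Fin.is_lt _) hnp
    have : ((e.symm k₁ : Fin n) : ℕ) = ((e.symm k₂ : Fin n) : ℕ) := by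
      have := congrArg ZMod.val h1
      rwa [ZMod.val_cast_of_lt hlt1, ZMod.val_cast_of_lt hlt2] at this
    have : (e.symm k₁ : Fin n) = (e.symm k₂ : Fin n) := Fin.ext this
    exact e.symm.injective (Subtype.ext this)
  set c : Fin m → ZMod p := fun k => ((w (e.symm k) : ℤ) : ZMod p) with hc
  -- cast of V entries
  have hVcast : ∀ (i : Fin n) (j : Fin m),
      ((V i j : ℤ) : ZMod p) = (((i : ℕ) : ZMod p) + 1) ^ (j : ℕ) := by
    intro i j
    have h := (ZMod.intCast_eq_intCast_iff (V i j) (((i : ℤ) + 1) ^ (j : ℕ)) p).mpr (hV_mod i j)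
    rw [h]
    push_cast
    ring
  -- the column relations over ZMod p
  have hcol : ∀ j : Fin m, (∑ i, ((w i : ℤ) : ZMod p) * ((((i : ℕ) : ZMod p) + 1) ^ (j : ℕ))) = 0 := by
    intro j
    have h0 : (∑ i, w i * V i j) = 0 := congrFun hw j
    have := congrArg (fun z : ℤ => (z : ZMod p)) h0
    simpa [Int.cast_sum, hVcast] using this
  -- w is supported on S
  have hwS : ∀ i, i ∉ S → w i = 0 := by
    intro i hi
    by_contra hne
    exact hi (hsubS (Finset.mem_filter.mpr ⟨Finset.mem_univ _, hne⟩))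
  -- c kills the Vandermonde matrix
  have hcA : Matrix.vecMul c (Matrix.vandermonde v) = 0 := by
    funext j
    have step1 : (∑ k : Fin m, c k * v k ^ (j : ℕ))
        = ∑ x : {x // x ∈ S}, ((w x : ℤ) : ZMod p) * ((((x : Fin n) : ℕ) : ZMod p) + 1) ^ (j : ℕ) := by
      rw [← Equiv.sum_comp e.symm
        (fun x : {x // x ∈ S} => ((w x : ℤ) : ZMod p) * ((((x : Fin n) : ℕ) : ZMod p) + 1) ^ (j : ℕ))]
    have step2 : (∑ x : {x // x ∈ S}, ((w x : ℤ) : ZMod p) * ((((x : Fin n) : ℕ) : ZMod p) + 1) ^ (j : ℕ))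
        = ∑ i ∈ S, ((w i : ℤ) : ZMod p) * ((((i : Fin n) : ℕ) : ZMod p) + 1) ^ (j : ℕ) :=
      Finset.sum_coe_sort S (fun i => ((w i : ℤ) : ZMod p) * ((((i : ℕ) : ZMod p) + 1) ^ (j : ℕ)))
    have step3 : (∑ i ∈ S, ((w i : ℤ) : ZMod p) * ((((i : Fin n) : ℕ) : ZMod p) + 1) ^ (j : ℕ))
        = ∑ i, ((w i : ℤ) : ZMod p) * ((((i : Fin n) : ℕ) : ZMod p) + 1) ^ (j : ℕ) := by
      apply Finset.sum_subset (Finset.subset_univ S)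
      intro i _ hi
      rw [hwS i hi]
      simp
    have : Matrix.vecMul c (Matrix.vandermonde v) j = ∑ k : Fin m, c k * v k ^ (j : ℕ) := by
      simp [Matrix.vecMul, dotProduct, Matrix.vandermonde]
    rw [this, step1, step2, step3, hcol j]
    rfl
  have hdet : (Matrix.vandermonde v).det ≠ 0 :=
    Matrix.det_vandermonde_ne_zero_iff.mpr hvinj
  have hc0 : c = 0 := Matrix.eq_zero_of_vecMul_eq_zero hdet hcA
  intro i
  by_cases hi : w i = 0
  · rw [hi]; exact dvd_zero _
  · have hiS : i ∈ S := hsubS (Finset.mem_filter.mpr ⟨Finset.mem_univ _, hi⟩)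
    have h7 := congrFun hc0 (e ⟨i, hiS⟩)
    have : ((w i : ℤ) : ZMod p) = 0 := by
      simpa [hc, Equiv.symm_apply_apply] using h7
    exact (ZMod.intCast_zmod_eq_zero_iff_dvd _ _).mp this

/-- Let `n ≥ m ≥ 1`, `p > n` prime, and `V` an `m`-certificate,
i.e. the `n × m` integer matrix with `0 ≤ V i j < p` and
`V i j ≡ (i+1)^j (mod p)` (0-indexed; this is `i^{j-1}` in 1-based indexing).
Every nonzero row vector `u ∈ ℤ^n` with at most `m` nonzero entries satisfies
`u V ≠ 0`, i.e. it is `V`-detectable as a row. -/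
theorem stmt_2 (n m p : ℕ) (hm : 1 ≤ m) (hmn : m ≤ n) (hp : p.Prime) (hnp : n < p)
    (V : Matrix (Fin n) (Fin m) ℤ)
    (hV_range : ∀ i j, 0 ≤ V i j ∧ V i j < p)
    (hV_mod : ∀ i j, V i j ≡ ((i : ℤ) + 1) ^ (j : ℕ) [ZMOD (p : ℤ)])
    (u : Fin n → ℤ) (hu : u ≠ 0)
    (hsupp : (Finset.univ.filter fun i => u i ≠ 0).card ≤ m) :
    Matrix.vecMul u V ≠ 0 := by
  intro h0
  have hppos : (0 : ℤ) < (p : ℤ) := by exact_mod_cast hp.pos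
  -- every entry of u is divisible by arbitrarily high powers of p
  have hdvd : ∀ k : ℕ, ∀ i, ((p : ℤ)) ^ k ∣ u i := by
    intro k
    induction k with
    | zero => intro i; simp
    | succ k ih =>
      set w : Fin n → ℤ := fun i => u i / (p : ℤ) ^ k with hwdef
      have hpk : ((p : ℤ)) ^ k ≠ 0 := pow_ne_zero _ (ne_of_gt hppos)
      have hueq : ∀ i, u i = (p : ℤ) ^ k * w i := fun i =>
        (Int.mul_ediv_cancel' (ih i)).symm
      have hsupp' : (Finset.univ.filter fun i => w i ≠ 0).card ≤ m := by
        have : (Finset.univ.filter fun i => w i ≠ 0)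
            = (Finset.univ.filter fun i => u i ≠ 0) := by
          apply Finset.filter_congr
          intro i _
          constructor
          · intro hwne hu0
            exact hwne (by
              have := hueq i
              rw [hu0] at this
              exact (mul_eq_zero.mp this.symm).resolve_left hpk)
          · intro hune hw0
            exact hune (by rw [hueq i, hw0, mul_zero])
        rw [this]; exact hsupp
      have hwV : Matrix.vecMul w V = 0 := by
        funext j
        have h1 : ∑ i, u i * V i j = 0 := congrFun h0 j
        have h2 : (p : ℤ) ^ k * (∑ i, w i * V i j) = 0 := by
          rw [Finset.mul_sum]
          rw [← h1]
          apply Finset.sum_congr rfl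
          intro i _
          rw [hueq i]; ring
        have : (∑ i, w i * V i j) = 0 := by
          rcases mul_eq_zero.mp h2 with h | h
          · exact absurd h hpk
          · exact h
        simpa [Matrix.vecMul, dotProduct] using this
      intro i
      have hpw : (p : ℤ) ∣ w i :=
        stmt_2_key n m p hmn hp hnp V hV_mod w hsupp' hwV i
      rw [hueq i, pow_succ]
      exact mul_dvd_mul_left _ hpw
  -- hence every entry is zero
  have hzero : ∀ i, u i = 0 := by
    intro i
    by_contra hne
    set a := (u i).natAbs with ha
    have h1 : ((p : ℤ)) ^ a ∣ |u i| := (dvd_abs _ _).mpr (hdvd a i)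
    have h2 : ((p : ℤ)) ^ a ≤ |u i| := Int.le_of_dvd (abs_pos.mpr hne) h1
    have h3 : a < p ^ a := Nat.lt_pow_self (n := a) hp.one_lt
    have h4 : |u i| = (a : ℤ) := Int.abs_eq_natAbs (u i)
    have h5 : ((p : ℤ)) ^ a = ((p ^ a : ℕ) : ℤ) := by push_cast; ring
    rw [h4, h5] at h2
    exact absurd (Int.ofNat_le.mp h2) (Nat.not_le.mpr h3)
  exact hu (funext hzero)
end

section
/- Let n ≥ m ≥ 1, let p > n be a prime, and let V be an m-certificate. Then every nonzero column vector u ∈ ℤ^n having at most m nonzero entries satisfies uᵀV ≠ 0; that is, every nonzero integer column vector u with at most m nonzero coordinates is V-detectable as a column. -/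
open Matrix

lemma vand_key (p n m : ℕ) (hp : p.Prime) (hmn : m ≤ n) (hnp : n < p)
    (x : Fin n → ZMod p) (hx : x ≠ 0)
    (hcard : (Finset.univ.filter fun i => x i ≠ 0).card ≤ m)
    (hsum : ∀ j : Fin m, ∑ i, x i * (((i : ℕ) + 1 : ZMod p)) ^ (j : ℕ) = 0) :
    False := by
  haveI : Fact p.Prime := ⟨hp⟩
  set S := Finset.univ.filter fun i => x i ≠ 0 with hS
  have hSne : S.Nonempty := by
    obtain ⟨i, hi⟩ := Function.ne_iff.mp hx
    refine ⟨i, Finset.mem_filter.mpr ⟨Finset.mem_univ i, ?_⟩⟩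
    simpa using hi
  set s := S.card with hs
  have hs1 : 1 ≤ s := Finset.card_pos.mpr hSne
  have hsm : s ≤ m := hcard
  let e : Fin s → Fin n := fun a => (S.orderIsoOfFin rfl a : Fin n)
  have he : Function.Injective e := fun a b hab => by
    have := Subtype.ext hab
    exact (S.orderIsoOfFin rfl).injective this
  let v : Fin s → ZMod p := fun a => ((e a : ℕ) + 1 : ZMod p)
  have hv : Function.Injective v := by
    intro a b hab
    apply he
    have hva : ((e a : ℕ) + 1 : ℕ) < p := by
      have := (e a).2; omega
    have hvb : ((e b : ℕ) + 1 : ℕ) < p := by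
      have := (e b).2; omega
    have : ((e a : ℕ) + 1 : ℕ) = ((e b : ℕ) + 1 : ℕ) := by
      have h1 := ZMod.val_cast_of_lt hva
      have h2 := ZMod.val_cast_of_lt hvb
      rw [← h1, ← h2]
      congr 1
      push_cast
      exact hab
    exact Fin.ext (by omega)
  let y : Fin s → ZMod p := fun a => x (e a)
  have hy : y = 0 := by
    apply Matrix.eq_zero_of_forall_pow_sum_mul_pow_eq_zero hv
    intro j
    have hjm : (j : ℕ) < m := lt_of_lt_of_le j.2 hsm
    have h := hsum ⟨j, hjm⟩
    simp only [Fin.val_mk] at h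
    rw [← h]
    have hsub : ∑ a : Fin s, y a * v a ^ (j : ℕ)
        = ∑ i ∈ S, x i * (((i : ℕ) + 1 : ZMod p)) ^ (j : ℕ) := by
      rw [← Finset.sum_attach S (fun i => x i * (((i : ℕ) + 1 : ZMod p)) ^ (j : ℕ))]
      exact Fintype.sum_equiv (S.orderIsoOfFin rfl).toEquiv _ _ (fun a => rfl)
    rw [hsub]
    apply Finset.sum_subset (Finset.subset_univ S)
    intro i _ hiS
    have : x i = 0 := by
      by_contra hxi
      exact hiS (by simp [hS, hxi])
    simp [this]
  obtain ⟨i, hi⟩ := hSne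
  have hxi : x i ≠ 0 := by simpa [hS] using hi
  have : x (e ((S.orderIsoOfFin rfl).symm ⟨i, hi⟩)) = 0 := congrFun hy _
  simp only [e, OrderIso.apply_symm_apply] at this
  exact hxi this

lemma stmt3_aux (n m p : ℕ) (hp : p.Prime) (hmn : m ≤ n) (hnp : n < p)
    (V : Matrix (Fin n) (Fin m) ℤ)
    (hV : ∀ i j, ((V i j : ZMod p)) = (((i : ℕ) + 1 : ZMod p)) ^ (j : ℕ)) :
    ∀ N : ℕ, ∀ u : Fin n → ℤ, (∑ i, (u i).natAbs) ≤ N → u ≠ 0 →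
      (Finset.univ.filter fun i => u i ≠ 0).card ≤ m →
      Matrix.mulVec Vᵀ u ≠ 0 := by
  intro N
  induction N with
  | zero =>
    intro u hN hu _ _
    apply hu
    funext i
    have := Finset.sum_eq_zero_iff_of_nonneg (fun i _ => Nat.zero_le _) |>.mp
      (Nat.le_zero.mp hN) i (Finset.mem_univ i)
    exact Int.natAbs_eq_zero.mp this
  | succ N ih =>
    intro u hN hu hsupp h0
    by_cases hdvd : ∀ i, (p : ℤ) ∣ u i
    · -- divide by p
      set w : Fin n → ℤ := fun i => u i / p with hw
      have huw : ∀ i, u i = p * w i := fun i => (Int.mul_ediv_cancel' (hdvd i)).symm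
      have hpne : (p : ℤ) ≠ 0 := by exact_mod_cast hp.ne_zero
      have hw0 : w ≠ 0 := by
        intro h
        apply hu
        funext i
        have hwi := congrFun h i
        simp only [Pi.zero_apply] at hwi
        rw [huw i, hwi, mul_zero]
        rfl
      have hwsupp : (Finset.univ.filter fun i => w i ≠ 0) =
          (Finset.univ.filter fun i => u i ≠ 0) := by
        apply Finset.filter_congr
        intro i _
        constructor
        · intro h h'; apply h; rw [huw i] at h'; exact (mul_eq_zero.mp h').resolve_left hpne
        · intro h h'; apply h; rw [huw i, h', mul_zero]
      have hwsum : (∑ i, (w i).natAbs) ≤ N := by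
        have hsum : (∑ i, (u i).natAbs) = p * ∑ i, (w i).natAbs := by
          rw [Finset.mul_sum]
          congr 1
          funext i
          rw [huw i, Int.natAbs_mul]
          simp
        have hpos : 1 ≤ ∑ i, (w i).natAbs := by
          by_contra h
          push_neg at h
          apply hw0
          funext i
          have := Finset.sum_eq_zero_iff_of_nonneg (fun i _ => Nat.zero_le _) |>.mp
            (Nat.lt_one_iff.mp h) i (Finset.mem_univ i)
          exact Int.natAbs_eq_zero.mp this
        have hp2 : 2 ≤ p := hp.two_le
        nlinarith [hsum ▸ hN]
      have hw00 : Matrix.mulVec Vᵀ w = 0 := by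
        funext j
        have h1 : Matrix.mulVec Vᵀ u j = 0 := congrFun h0 j
        have h2 : Matrix.mulVec Vᵀ u j = p * Matrix.mulVec Vᵀ w j := by
          simp only [Matrix.mulVec, dotProduct, Finset.mul_sum]
          congr 1
          funext i
          rw [huw i]; ring
        have := h1 ▸ h2
        exact (mul_eq_zero.mp this.symm).resolve_left hpne
      exact ih w hwsum hw0 (hwsupp ▸ hsupp) hw00
    · -- some entry not divisible by p: reduce mod p
      push_neg at hdvd
      obtain ⟨i0, hi0⟩ := hdvd
      set x : Fin n → ZMod p := fun i => ((u i : ZMod p)) with hx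
      have hx0 : x ≠ 0 := by
        intro h
        apply hi0
        have := congrFun h i0
        exact (ZMod.intCast_zmod_eq_zero_iff_dvd _ _).mp this
      have hxsupp : (Finset.univ.filter fun i => x i ≠ 0).card ≤ m := by
        refine le_trans (Finset.card_le_card ?_) hsupp
        intro i hi
        simp only [Finset.mem_filter, Finset.mem_univ, true_and] at hi ⊢
        intro h
        exact hi (by simp [hx, h])
      apply vand_key p n m hp hmn hnp x hx0 hxsupp
      intro j
      have h1 : (∑ i, V i j * u i) = 0 := by
        have := congrFun h0 j
        simpa [Matrix.mulVec, dotProduct, Matrix.transpose_apply] using this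
      have h2 : ((∑ i, V i j * u i : ℤ) : ZMod p) = 0 := by rw [h1]; simp
      rw [Int.cast_sum] at h2
      rw [← h2]
      congr 1
      funext i
      rw [Int.cast_mul, hV i j]
      ring

/-- Let `n ≥ m ≥ 1`, `p > n` prime, and `V` an `m`-certificate.
Every nonzero column vector `u ∈ ℤ^n` with at most `m` nonzero entries
satisfies `uᵀ V ≠ 0` (equivalently `Vᵀ u ≠ 0`), i.e. it is `V`-detectable as a
column. -/
theorem stmt_3 (n m p : ℕ) (hm : 1 ≤ m) (hmn : m ≤ n) (hp : p.Prime) (hnp : n < p)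
    (V : Matrix (Fin n) (Fin m) ℤ)
    (hV_range : ∀ i j, 0 ≤ V i j ∧ V i j < p)
    (hV_mod : ∀ i j, V i j ≡ ((i : ℤ) + 1) ^ (j : ℕ) [ZMOD (p : ℤ)])
    (u : Fin n → ℤ) (hu : u ≠ 0)
    (hsupp : (Finset.univ.filter fun i => u i ≠ 0).card ≤ m) :
    Matrix.mulVec Vᵀ u ≠ 0 := by
  have hV : ∀ i j, ((V i j : ZMod p)) = (((i : ℕ) + 1 : ZMod p)) ^ (j : ℕ) := by
    intro i j
    have h := hV_mod i j
    have := (ZMod.intCast_eq_intCast_iff _ _ _).mpr h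
    rw [this]
    push_cast
    ring
  exact stmt3_aux n m p hp hmn hnp V hV (∑ i, (u i).natAbs) u le_rfl hu hsupp
end

section
/- Let A, B, C be n×n integer matrices, let k ≥ 1 be a perfect square with √k ≤ n, let p > n be a prime, and let V be a √k-certificate. Suppose AB − C has at most k nonzero entries. If (AB − C)ᵀ V = 0 and (AB − C) V = 0, then AB = C. -/
open Matrix

private lemma key_vec {n m p : ℕ} (hp : p.Prime) (hnp : n < p)
    (V : Matrix (Fin n) (Fin m) ℤ)
    (hV : ∀ i j, V i j ≡ ((i : ℤ) + 1) ^ (j : ℕ) [ZMOD (p : ℤ)])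
    (w : Fin n → ℤ)
    (hw : (Finset.univ.filter fun c => w c ≠ 0).card ≤ m)
    (hsum : ∀ t : Fin m, ∑ c, w c * V c t = 0) : w = 0 := by
  haveI : Fact p.Prime := ⟨hp⟩
  classical
  set S : Finset (Fin n) := Finset.univ.filter fun c => w c ≠ 0 with hS
  set s : ℕ := S.card with hs
  have hsm : s ≤ m := hw
  let e : Fin s ≃ S := S.equivFin.symm
  -- the s × s submatrix of V
  let M : Matrix (Fin s) (Fin s) ℤ := fun a b =>
    V (e a) ⟨b, lt_of_lt_of_le b.2 hsm⟩
  let w' : Fin s → ℤ := fun a => w (e a)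
  have hsum' : ∀ b : Fin s, ∑ a, M a b * w' a = 0 := by
    intro b
    set t : Fin m := ⟨b, lt_of_lt_of_le b.2 hsm⟩
    have h1 : ∑ a : Fin s, M a b * w' a = ∑ c : S, V c t * w c :=
      Fintype.sum_equiv e _ _ (fun a => by simp [M, w', t, mul_comm])
    have h2 : ∑ c : S, V (c : Fin n) t * w (c : Fin n)
        = ∑ c ∈ S, V c t * w c := Finset.sum_coe_sort S (fun c => V c t * w c)
    have h3 : ∑ c ∈ S, V c t * w c = ∑ c, V c t * w c := by
      apply Finset.sum_subset (Finset.subset_univ _)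
      intro c _ hc
      simp only [hS, Finset.mem_filter, Finset.mem_univ, true_and, not_not] at hc
      simp [hc]
    rw [h1, h2, h3]
    calc ∑ c, V c t * w c = ∑ c, w c * V c t := by
          simp [mul_comm]
      _ = 0 := hsum t
  have hcast : M.map (Int.cast : ℤ → ZMod p)
      = Matrix.vandermonde (fun a : Fin s => ((e a : Fin n) : ZMod p) + 1) := by
    ext a b
    have := hV (e a) ⟨b, lt_of_lt_of_le b.2 hsm⟩
    have hcast1 : ((V (e a) ⟨b, lt_of_lt_of_le b.2 hsm⟩ : ℤ) : ZMod p)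
        = ((((e a : Fin n) : ℤ) + 1) ^ (b : ℕ) : ℤ) := by
      exact_mod_cast (ZMod.intCast_eq_intCast_iff _ _ _).mpr this
    simp only [Matrix.map_apply, Matrix.vandermonde_apply]
    rw [show ((M a b : ℤ) : ZMod p) = _ from hcast1]
    push_cast
    rfl
  have hinj : Function.Injective (fun a : Fin s => ((e a : Fin n) : ZMod p) + 1) := by
    intro a a' h
    have h' : (((e a : Fin n) : ℕ) : ZMod p) = (((e a' : Fin n) : ℕ) : ZMod p) := by
      have := add_right_cancel h
      simpa using this
    have hva : ((e a : Fin n) : ℕ) < p := lt_trans (e a : Fin n).2 hnp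
    have hva' : ((e a' : Fin n) : ℕ) < p := lt_trans (e a' : Fin n).2 hnp
    have : ((e a : Fin n) : ℕ) = ((e a' : Fin n) : ℕ) := by
      have := congrArg ZMod.val h'
      rwa [ZMod.val_cast_of_lt hva, ZMod.val_cast_of_lt hva'] at this
    exact e.injective (Subtype.ext (Fin.ext this))
  have hdet : M.det ≠ 0 := by
    intro h0
    have : (M.map (Int.cast : ℤ → ZMod p)).det = 0 := by
      have h2 := RingHom.map_det (Int.castRingHom (ZMod p)) M
      rw [h0] at h2
      simpa using h2.symm
    rw [hcast, Matrix.det_vandermonde] at this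
    have hne : ∀ i : Fin s, ∀ j ∈ Finset.Ioi i,
        ((((e j : Fin n) : ZMod p) + 1) - (((e i : Fin n) : ZMod p) + 1)) ≠ 0 := by
      intro i j hj
      rw [sub_ne_zero]
      intro h
      have := hinj h
      simp only [this, Finset.mem_Ioi, lt_self_iff_false] at hj
    exact (Finset.prod_ne_zero_iff.mpr fun i _ =>
      Finset.prod_ne_zero_iff.mpr fun j hj => hne i j hj) this
  have hmv : Mᵀ.mulVec w' = 0 := by
    funext b
    simpa [Matrix.mulVec, dotProduct, Matrix.transpose_apply] using hsum' b
  have hw0 : w' = 0 := Matrix.eq_zero_of_mulVec_eq_zero (by rwa [Matrix.det_transpose]) hmv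
  funext c
  simp only [Pi.zero_apply]
  by_contra hc
  have hcS : c ∈ S := by simp [hS, hc]
  have : w' (S.equivFin ⟨c, hcS⟩) = w c := by
    simp [w', e]
  rw [hw0] at this
  exact hc (by simpa using this.symm)

/-- Let `A, B, C` be `n × n` integer matrices, `k ≥ 1` a perfect
square (`k = m * m` with `m = √k`), `√k ≤ n`, `p > n` prime, and `V` a
`√k`-certificate. If `A * B - C` has at most `k` nonzero entries and both the
column-indicator `(A * B - C)ᵀ * V` and the row-indicator `(A * B - C) * V`
vanish, then `A * B = C`. -/
theorem stmt_5 (n k m p : ℕ) (hk : 1 ≤ k) (hkm : m * m = k) (hmn : m ≤ n)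
    (hp : p.Prime) (hnp : n < p)
    (A B C : Matrix (Fin n) (Fin n) ℤ)
    (V : Matrix (Fin n) (Fin m) ℤ)
    (hV_range : ∀ i j, 0 ≤ V i j ∧ V i j < p)
    (hV_mod : ∀ i j, V i j ≡ ((i : ℤ) + 1) ^ (j : ℕ) [ZMOD (p : ℤ)])
    (herr : (Finset.univ.filter
      fun q : Fin n × Fin n => (A * B - C) q.1 q.2 ≠ 0).card ≤ k)
    (hIC : (A * B - C)ᵀ * V = 0) (hIR : (A * B - C) * V = 0) :
    A * B = C := by
  classical
  set E : Matrix (Fin n) (Fin n) ℤ := A * B - C with hE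
  suffices hE0 : E = 0 by
    have := sub_eq_zero.mp hE0
    linear_combination (norm := abel) this
  by_contra hne
  obtain ⟨i, c, hic⟩ : ∃ i c, E i c ≠ 0 := by
    by_contra h
    push_neg at h
    exact hne (by ext i c; simp [h i c])
  -- the row i has more than m nonzero entries
  have hrow : ∀ r : Fin n, E r c ≠ 0 →
      m < (Finset.univ.filter fun j => E r j ≠ 0).card := by
    intro r hr
    by_contra hle
    push_neg at hle
    have := key_vec hp hnp V hV_mod (fun j => E r j) hle (fun t => by
      have := congrFun (congrFun hIR r) t
      simpa [Matrix.mul_apply] using this)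
    exact hr (congrFun this c)
  -- each nonzero column has more than m nonzero entries
  have hcol : ∀ j : Fin n, E i j ≠ 0 →
      m < (Finset.univ.filter fun r => E r j ≠ 0).card := by
    intro j hj
    by_contra hle
    push_neg at hle
    have := key_vec hp hnp V hV_mod (fun r => E r j) hle (fun t => by
      have := congrFun (congrFun hIC j) t
      simpa [Matrix.mul_apply, Matrix.transpose_apply] using this)
    exact hj (congrFun this i)
  -- counting
  set Q : Finset (Fin n × Fin n) :=
    Finset.univ.filter fun q : Fin n × Fin n => E q.1 q.2 ≠ 0 with hQ
  set Cols : Finset (Fin n) := Finset.univ.filter fun j => E i j ≠ 0 with hCols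
  have hCcard : m + 1 ≤ Cols.card := hrow i hic
  have hfiber : ∀ j ∈ Cols, m + 1 ≤ (Q.filter fun q => q.2 = j).card := by
    intro j hj
    simp only [hCols, Finset.mem_filter, Finset.mem_univ, true_and] at hj
    have hcj := hcol j hj
    have : (Finset.univ.filter fun r => E r j ≠ 0).card
        = (Q.filter fun q => q.2 = j).card := by
      apply Finset.card_bij (fun r _ => (r, j))
      · intro r hr
        simp only [Finset.mem_filter, Finset.mem_univ, true_and] at hr ⊢
        simp [hQ, hr]
      · intro r _ r' _ h
        exact (Prod.mk.injEq _ _ _ _ ▸ h).1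
      · intro q hq
        simp only [hQ, Finset.mem_filter, Finset.mem_univ, true_and] at hq
        exact ⟨q.1, by simp [← hq.2, hq.1], by rw [← hq.2]⟩
    omega
  have hsum : ∑ j ∈ Cols, (Q.filter fun q => q.2 = j).card ≤ Q.card := by
    have h1 : Q.card = ∑ j : Fin n, (Q.filter fun q => q.2 = j).card :=
      Finset.card_eq_sum_card_fiberwise (fun q _ => Finset.mem_univ q.2)
    rw [h1]
    exact Finset.sum_le_sum_of_subset (Finset.subset_univ _)
  have hbig : (m + 1) * (m + 1) ≤ Q.card := by
    calc (m + 1) * (m + 1) ≤ Cols.card * (m + 1) :=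
          Nat.mul_le_mul_right _ hCcard
      _ = ∑ _j ∈ Cols, (m + 1) := by rw [Finset.sum_const, smul_eq_mul]
      _ ≤ ∑ j ∈ Cols, (Q.filter fun q => q.2 = j).card :=
          Finset.sum_le_sum hfiber
      _ ≤ Q.card := hsum
  have : Q.card ≤ k := herr
  nlinarith [hbig, this, hkm]
end

section
/- Let n ≥ m ≥ 1, let p > n be a prime, let V be an m-certificate, and let M be an n×n integer matrix with at most m² nonzero entries. If row i of M is nonzero but not V-detectable (i.e., the i-th row of MV is zero), then there exists an index j such that M_{ij} ≠ 0 and column j of M is V-detectable (i.e., the j-th column of MᵀV is nonzero). -/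
open Matrix

/-!
An integer vector `u` with at most `m` nonzero entries and `u V = 0` must vanish: the rows of `V`
on the support of `u`, cut down to as many columns, form a square integer matrix whose reduction
mod `p` is the Vandermonde matrix at the distinct nodes `1, …, n` (distinct because `p > n`), so
its determinant is nonzero. Hence the undetected row `i` has more than `m` nonzero entries, and if
every column `j` with `M i j ≠ 0` were undetected, each of them would also have more than `m`
nonzero entries, giving at least `(m + 1)²` nonzero entries in `M`.
-/

open Finset

section Vandermonde

variable {R K : Type*} [CommRing R] [CommRing K] [IsDomain K]

theorem Matrix.det_ne_zero_of_map_eq_vandermonde {s : ℕ} (f : R →+* K)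
    {W : Matrix (Fin s) (Fin s) R} {y : Fin s → K} (hy : Function.Injective y)
    (hW : f.mapMatrix W = vandermonde y) : W.det ≠ 0 := by
  intro h
  have hmap : f W.det = (vandermonde y).det := by rw [RingHom.map_det, hW]
  rw [h, map_zero] at hmap
  exact Matrix.det_vandermonde_ne_zero_iff.mpr hy hmap.symm

theorem eq_zero_of_vecMul_eq_zero_of_map_pow [NoZeroDivisors R] [DecidableEq R] {ι : Type*}
    [Fintype ι] {m : ℕ} (f : R →+* K) {V : Matrix ι (Fin m) R} {x : ι → K}
    (hx : Function.Injective x)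
    (hV : ∀ i j, f (V i j) = x i ^ (j : ℕ)) {u : ι → R} (hu : #{k | u k ≠ 0} ≤ m)
    (huV : u ᵥ* V = 0) : u = 0 := by
  set S : Finset ι := {k | u k ≠ 0}
  let e : S ≃ Fin #S := S.equivFin
  let W : Matrix (Fin #S) (Fin #S) R := fun a b => V (e.symm a) (Fin.castLE hu b)
  have hW : f.mapMatrix W = vandermonde (fun a => x (e.symm a)) := by
    ext a b
    exact hV _ _
  have hdet : W.det ≠ 0 := Matrix.det_ne_zero_of_map_eq_vandermonde f
    (hx.comp (Subtype.val_injective.comp e.symm.injective)) hW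
  have hdW : (fun a => u (e.symm a)) ᵥ* W = 0 := by
    ext b
    calc ((fun a => u (e.symm a)) ᵥ* W) b = ∑ k ∈ S, u k * V k (Fin.castLE hu b) :=
          (e.symm.sum_comp fun k : S => u k * V k (Fin.castLE hu b)).trans
            (sum_coe_sort S fun k => u k * V k (Fin.castLE hu b))
      _ = (u ᵥ* V) (Fin.castLE hu b) :=
          sum_filter_of_ne fun k _ hk => left_ne_zero_of_mul hk
      _ = 0 := by rw [huV]; rfl
  have hd := Matrix.eq_zero_of_vecMul_eq_zero hdet hdW
  ext k
  by_contra hk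
  have hkS : k ∈ S := mem_filter.mpr ⟨mem_univ k, hk⟩
  exact hk (by simpa using congrFun hd (e ⟨k, hkS⟩))

end Vandermonde

theorem certificate_eq_zero_of_vecMul_eq_zero {n m p : ℕ} (hp : p.Prime) (hnp : n < p)
    {V : Matrix (Fin n) (Fin m) ℤ}
    (hV_mod : ∀ i j, V i j ≡ ((i : ℤ) + 1) ^ (j : ℕ) [ZMOD (p : ℤ)])
    {u : Fin n → ℤ} (hu : #{k | u k ≠ 0} ≤ m) (huV : u ᵥ* V = 0) : u = 0 := by
  have : Fact p.Prime := ⟨hp⟩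
  have hx : Function.Injective fun i : Fin n => (((i : ℕ) + 1 : ℕ) : ZMod p) := by
    intro a b hab
    rw [ZMod.natCast_eq_natCast_iff', Nat.mod_eq_of_lt (by omega),
      Nat.mod_eq_of_lt (by omega)] at hab
    exact Fin.ext (by omega)
  refine eq_zero_of_vecMul_eq_zero_of_map_pow (Int.castRingHom (ZMod p)) hx (fun i j => ?_) hu huV
  rw [eq_intCast, (ZMod.intCast_eq_intCast_iff _ _ _).mpr (hV_mod i j)]
  push_cast
  rfl

theorem Finset.card_filter_prod_eq_sum {α β : Type*} [Fintype α] [Fintype β]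
    (P : α × β → Prop) [DecidablePred P] :
    #{q | P q} = ∑ b, #{a | P (a, b)} := by
  simp only [card_filter, Fintype.sum_prod_type_right]

theorem Matrix.add_one_sq_le_card_ne_zero {α R : Type*} [Fintype α] [Zero R] [DecidableEq R]
    (M : Matrix α α R) {m : ℕ} (i : α) (hrow : m < #{j | M i j ≠ 0})
    (hcol : ∀ j, M i j ≠ 0 → m < #{k | M k j ≠ 0}) :
    (m + 1) ^ 2 ≤ #{q : α × α | M q.1 q.2 ≠ 0} := by
  rw [card_filter_prod_eq_sum]
  calc (m + 1) ^ 2 ≤ #{j | M i j ≠ 0} • (m + 1) := by rw [smul_eq_mul, sq]; gcongr; omega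
    _ ≤ ∑ j ∈ {j | M i j ≠ 0}, #{k | M k j ≠ 0} :=
        card_nsmul_le_sum _ _ _ fun j hj => hcol j (mem_filter.mp hj).2
    _ ≤ ∑ j, #{k | M k j ≠ 0} := sum_le_sum_of_subset (subset_univ _)

theorem stmt_8_general (n m p : ℕ) (hp : p.Prime) (hnp : n < p)
    (V : Matrix (Fin n) (Fin m) ℤ)
    (hV_mod : ∀ i j, V i j ≡ ((i : ℤ) + 1) ^ (j : ℕ) [ZMOD (p : ℤ)])
    (M : Matrix (Fin n) (Fin n) ℤ)
    (hcard : (Finset.univ.filter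
      fun q : Fin n × Fin n => M q.1 q.2 ≠ 0).card ≤ m ^ 2)
    (i : Fin n)
    (hrow_nonzero : M i ≠ 0)
    (hrow_undetected : (M * V) i = 0) :
    ∃ j, M i j ≠ 0 ∧ (Mᵀ * V) j ≠ 0 := by
  by_contra! hcols
  have hrow : m < #{j | M i j ≠ 0} := lt_of_not_ge fun h =>
    hrow_nonzero (certificate_eq_zero_of_vecMul_eq_zero hp hnp hV_mod h hrow_undetected)
  have hcol (j : Fin n) (hij : M i j ≠ 0) : m < #{k | M k j ≠ 0} := lt_of_not_ge fun h =>
    hij (congrFun (certificate_eq_zero_of_vecMul_eq_zero hp hnp hV_mod h (hcols j hij)) i)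
  have := M.add_one_sq_le_card_ne_zero i hrow hcol
  nlinarith

/-- Let `n ≥ m ≥ 1`, `p > n` prime, `V` an `m`-certificate, and
`M` an `n × n` integer matrix with at most `m²` nonzero entries. If row `i`
of `M` is nonzero but not `V`-detectable (row `i` of `M * V` is zero), then
there is a `j` with `M i j ≠ 0` such that column `j` of `M` is `V`-detectable
(the row of `Mᵀ * V` indexed by `j`, i.e. (column `j` of `M`)ᵀ`V`, is nonzero). -/
theorem stmt_8 (n m p : ℕ) (hm : 1 ≤ m) (hmn : m ≤ n) (hp : p.Prime) (hnp : n < p)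
    (V : Matrix (Fin n) (Fin m) ℤ)
    (hV_range : ∀ i j, 0 ≤ V i j ∧ V i j < p)
    (hV_mod : ∀ i j, V i j ≡ ((i : ℤ) + 1) ^ (j : ℕ) [ZMOD (p : ℤ)])
    (M : Matrix (Fin n) (Fin n) ℤ)
    (hcard : (Finset.univ.filter
      fun q : Fin n × Fin n => M q.1 q.2 ≠ 0).card ≤ m ^ 2)
    (i : Fin n)
    (hrow_nonzero : M i ≠ 0)
    (hrow_undetected : (M * V) i = 0) :
    ∃ j, M i j ≠ 0 ∧ (Mᵀ * V) j ≠ 0 :=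
  stmt_8_general n m p hp hnp V hV_mod M hcard i hrow_nonzero hrow_undetected
end

section
/- Let n ≥ m ≥ 1, let p > n be a prime, let V be an m-certificate, and let M₀ be an n×n integer matrix with at most m² nonzero entries. Let S₀ = {i : row i of M₀V is nonzero} and T₀ = {j : column j of M₀ᵀV is nonzero}, and let M be the matrix obtained from M₀ by setting M_{ij} = 0 for every (i,j) ∈ S₀ × T₀ and leaving all other entries unchanged. Then for every i ∈ S₀, row i of M contains at most m nonzero entries, and for every j ∈ T₀, column j of M contains at most m nonzero entries. -/
open Matrix

private lemma vand_ker {F : Type*} [Field F] [DecidableEq F] {n m : ℕ}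
    (x : Fin n → F) (hx : Function.Injective x) (z : Fin n → F)
    (hsupp : (Finset.univ.filter fun k => z k ≠ 0).card ≤ m)
    (hrel : ∀ l < m, ∑ k, z k * (x k) ^ l = 0) : z = 0 := by
  classical
  set K := Finset.univ.filter fun k => z k ≠ 0 with hK
  have hmemK : ∀ k, k ∈ K ↔ z k ≠ 0 := by intro k; simp [hK]
  have hrelK : ∀ l < m, ∑ k ∈ K, z k * x k ^ l = 0 := by
    intro l hl
    rw [← hrel l hl]
    refine Finset.sum_subset (Finset.subset_univ _) ?_
    intro k _ hk
    have : z k = 0 := by by_contra h; exact hk ((hmemK k).mpr h)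
    simp [this]
  funext k₀
  by_cases hk₀ : k₀ ∈ K
  · have hinj : Set.InjOn x K := hx.injOn
    set P := Lagrange.basis K x k₀ with hP
    have hdeg : P.natDegree < m := by
      have h1 := Lagrange.natDegree_basis hinj hk₀
      have hc : 1 ≤ K.card := Finset.card_pos.mpr ⟨k₀, hk₀⟩
      rw [hP, h1]
      omega
    have hzk : z k₀ = ∑ k ∈ K, z k * P.eval (x k) := by
      rw [Finset.sum_eq_single k₀]
      · rw [hP, Lagrange.eval_basis_self hinj hk₀, mul_one]
      · intro k hk hne
        rw [hP, Lagrange.eval_basis_of_ne (Ne.symm hne) hk, mul_zero]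
      · intro h; exact absurd hk₀ h
    rw [hzk]
    have heval : ∀ k ∈ K, z k * P.eval (x k)
        = ∑ l ∈ Finset.range m, P.coeff l * (z k * x k ^ l) := by
      intro k _
      rw [Polynomial.eval_eq_sum_range' hdeg, Finset.mul_sum]
      apply Finset.sum_congr rfl
      intro l _
      ring
    rw [Finset.sum_congr rfl heval, Finset.sum_comm]
    apply Finset.sum_eq_zero
    intro l hl
    rw [← Finset.mul_sum, hrelK l (Finset.mem_range.mp hl), mul_zero]
  · by_contra h
    exact hk₀ ((hmemK k₀).mpr h)

private lemma int_ker {n m p : ℕ} (hp : p.Prime) (x : Fin n → ZMod p)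
    (hx : Function.Injective x)
    (W : Fin n → Fin m → ℤ) (hW : ∀ k l, ((W k l : ZMod p)) = x k ^ (l : ℕ)) :
    ∀ N (y : Fin n → ℤ), (∑ k, (y k).natAbs) ≤ N →
      (Finset.univ.filter fun k => y k ≠ 0).card ≤ m →
      (∀ l : Fin m, ∑ k, y k * W k l = 0) → y = 0 := by
  haveI : Fact p.Prime := ⟨hp⟩
  intro N
  induction N with
  | zero =>
    intro y hy _ _
    funext k
    have h1 : (y k).natAbs ≤ ∑ k, (y k).natAbs :=
      Finset.single_le_sum (f := fun k => (y k).natAbs)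
        (fun _ _ => Nat.zero_le _) (Finset.mem_univ k)
    have : (y k).natAbs = 0 := by omega
    exact Int.natAbs_eq_zero.mp this
  | succ N ih =>
    intro y hy hsupp hrel
    -- all entries divisible by p
    have hdvd : ∀ k, (p : ℤ) ∣ y k := by
      intro k
      have hz : (fun k => ((y k : ZMod p))) = 0 := by
        apply vand_ker x hx
        · refine le_trans (Finset.card_le_card ?_) hsupp
          intro k hk
          simp only [Finset.mem_filter, Finset.mem_univ, true_and] at hk ⊢
          intro h0
          exact hk (by simp [h0])
        · intro l hl
          have h1 := hrel ⟨l, hl⟩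
          have h2 := congrArg (fun t : ℤ => ((t : ZMod p))) h1
          push_cast at h2
          simp only [hW] at h2
          simpa using h2
      have := congrFun hz k
      simpa [ZMod.intCast_zmod_eq_zero_iff_dvd] using this
    by_cases hy0 : y = 0
    · exact hy0
    · obtain ⟨k₀, hk₀⟩ : ∃ k, y k ≠ 0 := by
        by_contra h
        push_neg at h
        exact hy0 (funext h)
      set y' : Fin n → ℤ := fun k => y k / p with hy'
      have hpy : ∀ k, y k = p * y' k := fun k =>
        (Int.mul_ediv_cancel' (hdvd k)).symm
      have hppos : (0 : ℤ) < p := by exact_mod_cast hp.pos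
      have hy'0 : y' = 0 := by
        apply ih
        · -- sum of natAbs decreased
          have hle : ∀ k : Fin n, k ∈ Finset.univ → (y' k).natAbs ≤ (y k).natAbs := by
            intro k _
            rw [hpy k, Int.natAbs_mul, Int.natAbs_natCast]
            exact Nat.le_mul_of_pos_left _ hp.pos
          have hlt : (y' k₀).natAbs < (y k₀).natAbs := by
            rw [hpy k₀, Int.natAbs_mul, Int.natAbs_natCast]
            have hy'k : (y' k₀).natAbs ≠ 0 := by
              intro h
              apply hk₀
              rw [hpy k₀, Int.natAbs_eq_zero.mp h, mul_zero]
            have h2 := Nat.pos_of_ne_zero hy'k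
            calc (y' k₀).natAbs < 2 * (y' k₀).natAbs := by omega
            _ ≤ p * (y' k₀).natAbs := Nat.mul_le_mul_right _ hp.two_le
          have := Finset.sum_lt_sum hle ⟨k₀, Finset.mem_univ k₀, hlt⟩
          omega
        · refine le_trans (Finset.card_le_card ?_) hsupp
          intro k hk
          simp only [Finset.mem_filter, Finset.mem_univ, true_and] at hk ⊢
          intro h0
          exact hk (by rw [hy']; simp [h0])
        · intro l
          have h1 := hrel l
          have h2 : ∑ k, y k * W k l = (p : ℤ) * ∑ k, y' k * W k l := by
            rw [Finset.mul_sum]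
            apply Finset.sum_congr rfl
            intro k _
            rw [hpy k]; ring
          rw [h2] at h1
          rcases mul_eq_zero.mp h1 with h | h
          · exact absurd h (by positivity)
          · exact h
      exact absurd (funext fun k => by rw [hpy k, congrFun hy'0 k]; simp) hy0

private lemma count_aux {n m : ℕ} (A : Fin n → Fin n → ℤ)
    (hcard : (Finset.univ.filter fun q : Fin n × Fin n => A q.1 q.2 ≠ 0).card ≤ m ^ 2)
    (B : Finset (Fin n))
    (hB : ∀ j ∈ B, m + 1 ≤ (Finset.univ.filter fun i => A i j ≠ 0).card) :
    B.card ≤ m := by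
  classical
  set s := Finset.univ.filter fun q : Fin n × Fin n => A q.1 q.2 ≠ 0 ∧ q.2 ∈ B with hs
  have hsub : s ⊆ Finset.univ.filter fun q : Fin n × Fin n => A q.1 q.2 ≠ 0 := by
    intro q hq
    simp only [hs, Finset.mem_filter, Finset.mem_univ, true_and] at hq ⊢
    exact hq.1
  have hfib : s.card = ∑ j ∈ B, (s.filter fun q => q.2 = j).card :=
    Finset.card_eq_sum_card_fiberwise (by
      intro q hq
      simp only [hs, Finset.mem_coe, Finset.mem_filter, Finset.mem_univ, true_and] at hq
      exact hq.2)
  have hfibeq : ∀ j ∈ B, (s.filter fun q => q.2 = j).card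
      = (Finset.univ.filter fun i => A i j ≠ 0).card := by
    intro j hj
    have : (s.filter fun q => q.2 = j)
        = (Finset.univ.filter fun i => A i j ≠ 0).image (fun i => (i, j)) := by
      ext ⟨a, b⟩
      simp only [hs, Finset.mem_filter, Finset.mem_univ, true_and, Finset.mem_image,
        Prod.mk.injEq]
      constructor
      · rintro ⟨⟨h1, _⟩, h3⟩
        subst h3
        exact ⟨a, h1, rfl, rfl⟩
      · rintro ⟨i, hi, rfl, rfl⟩
        exact ⟨⟨hi, hj⟩, rfl⟩
    rw [this, Finset.card_image_of_injective _ (fun a b hab => (Prod.mk.injEq _ _ _ _ ▸ hab).1)]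
  have key : B.card * (m + 1) ≤ m ^ 2 := by
    calc B.card * (m + 1) = ∑ _j ∈ B, (m + 1) := by rw [Finset.sum_const, smul_eq_mul]
    _ ≤ ∑ j ∈ B, (s.filter fun q => q.2 = j).card := by
        apply Finset.sum_le_sum
        intro j hj
        rw [hfibeq j hj]
        exact hB j hj
    _ = s.card := hfib.symm
    _ ≤ _ := Finset.card_le_card hsub
    _ ≤ m ^ 2 := hcard
  nlinarith [key]

/-- Let `n ≥ m ≥ 1`, `p > n` prime, `V` an `m`-certificate, and
`M₀` an `n × n` integer matrix with at most `m²` nonzero entries. Let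
`S₀ = {i : row i of M₀ * V is nonzero}` and `T₀ = {j : row j of M₀ᵀ * V is
nonzero}`, and let `M` be obtained from `M₀` by zeroing all entries indexed by
`S₀ × T₀`. Then every row of `M` indexed by `S₀` has at most `m` nonzero
entries, and every column of `M` indexed by `T₀` has at most `m` nonzero
entries. -/
theorem stmt_9 (n m p : ℕ) (hm : 1 ≤ m) (hmn : m ≤ n) (hp : p.Prime) (hnp : n < p)
    (V : Matrix (Fin n) (Fin m) ℤ)
    (hV_range : ∀ i j, 0 ≤ V i j ∧ V i j < p)
    (hV_mod : ∀ i j, V i j ≡ ((i : ℤ) + 1) ^ (j : ℕ) [ZMOD (p : ℤ)])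
    (M₀ : Matrix (Fin n) (Fin n) ℤ)
    (hcard : (Finset.univ.filter
      fun q : Fin n × Fin n => M₀ q.1 q.2 ≠ 0).card ≤ m ^ 2)
    (S₀ T₀ : Finset (Fin n))
    (hS₀ : ∀ i, i ∈ S₀ ↔ (M₀ * V) i ≠ 0)
    (hT₀ : ∀ j, j ∈ T₀ ↔ (M₀ᵀ * V) j ≠ 0)
    (M : Matrix (Fin n) (Fin n) ℤ)
    (hM : ∀ i j, M i j = if i ∈ S₀ ∧ j ∈ T₀ then 0 else M₀ i j) :
    (∀ i ∈ S₀, (Finset.univ.filter fun j => M i j ≠ 0).card ≤ m) ∧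
      (∀ j ∈ T₀, (Finset.univ.filter fun i => M i j ≠ 0).card ≤ m) := by
  classical
  haveI : Fact p.Prime := ⟨hp⟩
  set x : Fin n → ZMod p := fun k => ((k : ℕ) : ZMod p) + 1 with hxdef
  have hx : Function.Injective x := by
    intro a b hab
    have h1 : ((a : ℕ) : ZMod p) = ((b : ℕ) : ZMod p) := by
      have := hab
      simp only [hxdef] at this
      exact add_right_cancel this
    have h2 : (a : ℕ) = (b : ℕ) := by
      have ha := ZMod.val_cast_of_lt (lt_trans a.2 hnp)
      have hb := ZMod.val_cast_of_lt (lt_trans b.2 hnp)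
      rw [← ha, ← hb, h1]
    exact Fin.ext h2
  have hW : ∀ (k : Fin n) (l : Fin m), ((V k l : ZMod p)) = x k ^ (l : ℕ) := by
    intro k l
    have h1 := (ZMod.intCast_eq_intCast_iff _ _ _).mpr (hV_mod k l)
    rw [h1]
    push_cast
    rfl
  -- column kill: j ∉ T₀ with small support column ⇒ column zero
  have hcol : ∀ j : Fin n, j ∉ T₀ →
      (Finset.univ.filter fun i => M₀ i j ≠ 0).card ≤ m → ∀ i, M₀ i j = 0 := by
    intro j hj hsupp i
    have h0 : (M₀ᵀ * V) j = 0 := by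
      by_contra h
      exact hj ((hT₀ j).mpr h)
    have hrel : ∀ l : Fin m, ∑ k, M₀ k j * V k l = 0 := by
      intro l
      have := congrFun h0 l
      simpa [Matrix.mul_apply, Matrix.transpose_apply] using this
    have := int_ker hp x hx (fun k l => V k l) hW
      (∑ k, (M₀ k j).natAbs) (fun k => M₀ k j) le_rfl hsupp hrel
    exact congrFun this i
  have hrow : ∀ i : Fin n, i ∉ S₀ →
      (Finset.univ.filter fun j => M₀ i j ≠ 0).card ≤ m → ∀ j, M₀ i j = 0 := by
    intro i hi hsupp j
    have h0 : (M₀ * V) i = 0 := by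
      by_contra h
      exact hi ((hS₀ i).mpr h)
    have hrel : ∀ l : Fin m, ∑ k, M₀ i k * V k l = 0 := by
      intro l
      have := congrFun h0 l
      simpa [Matrix.mul_apply] using this
    have := int_ker hp x hx (fun k l => V k l) hW
      (∑ k, (M₀ i k).natAbs) (fun k => M₀ i k) le_rfl hsupp hrel
    exact congrFun this j
  constructor
  · intro i hi
    set B := Finset.univ.filter fun j : Fin n => j ∉ T₀ ∧ ∃ i', M₀ i' j ≠ 0 with hBdef
    have hBcard : B.card ≤ m := by
      apply count_aux M₀ hcard
      intro j hj
      simp only [hBdef, Finset.mem_filter, Finset.mem_univ, true_and] at hj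
      obtain ⟨hjT, i', hi'⟩ := hj
      by_contra h
      push_neg at h
      exact hi' (hcol j hjT (by omega) i')
    refine le_trans (Finset.card_le_card ?_) hBcard
    intro j hj
    simp only [Finset.mem_filter, Finset.mem_univ, true_and] at hj
    simp only [hBdef, Finset.mem_filter, Finset.mem_univ, true_and]
    rw [hM] at hj
    by_cases hjT : j ∈ T₀
    · exact absurd (by simp [hi, hjT]) hj
    · refine ⟨hjT, i, ?_⟩
      simpa [hi, hjT] using hj
  · intro j hj
    set B := Finset.univ.filter fun i : Fin n => i ∉ S₀ ∧ ∃ j', M₀ i j' ≠ 0 with hBdef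
    have hcard' : (Finset.univ.filter
        fun q : Fin n × Fin n => M₀ q.2 q.1 ≠ 0).card ≤ m ^ 2 := by
      refine le_trans (le_of_eq ?_) hcard
      apply Finset.card_nbij' (fun q => q.swap) (fun q => q.swap)
      · intro q hq; simpa using hq
      · intro q hq; simpa using hq
      · intro q _; simp
      · intro q _; simp
    have hBcard : B.card ≤ m := by
      apply count_aux (fun a b => M₀ b a) hcard'
      intro i hi
      simp only [hBdef, Finset.mem_filter, Finset.mem_univ, true_and] at hi
      obtain ⟨hiS, j', hj'⟩ := hi
      by_contra h
      push_neg at h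
      exact hj' (hrow i hiS (by omega) j')
    refine le_trans (Finset.card_le_card ?_) hBcard
    intro i hi
    simp only [Finset.mem_filter, Finset.mem_univ, true_and] at hi
    simp only [hBdef, Finset.mem_filter, Finset.mem_univ, true_and]
    rw [hM] at hi
    by_cases hiS : i ∈ S₀
    · exact absurd (by simp [hiS, hj]) hi
    · refine ⟨hiS, j, ?_⟩
      simpa [hiS, hj] using hi
end
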